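/- Fix an index i and positive real numbers q_i, q_{i+1}, e. Define ẽ = e·q_i/(e + q_{i+1}), q̃_i = q_{i+1}·q_i/(e + q_{i+1}), q̃_{i+1} = e + q_{i+1}. Then ẽ, q̃_i, q̃_{i+1} are positive and the original variables are recovered by the subtraction-free formulas e = ẽ·q̃_{i+1}/(ẽ + q̃_i), q_i = ẽ + q̃_i, and q_{i+1} = q̃_i·q̃_{i+1}/(ẽ + q̃_i); that is, the two rational maps (e, q_i, q_{i+1}) ↦ (ẽ, q̃_i, q̃_{i+1}) and (ẽ, q̃_i, q̃_{i+1}) ↦ (e, q_i, q_{i+1}) given by these formulas are mutually inverse bijections on triples of positive reals. -/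

import Mathlib

/-!
The forward step keeps `e + q_{i+1}` as `q̃_{i+1}` and splits `q_i` into the two parts
`ẽ + q̃_i = q_i` proportional to `e` and `q_{i+1}`; the inverse step does the same with the
roles of `q_i` and `q_{i+1}` exchanged. Knowing the sum and the splitting ratio, each
step undoes the other.
-/

section ElementaryStep

variable {K : Type*} [Field K]

theorem mul_div_add_mul_div_eq {a b : K} (c : K) (h : a + b ≠ 0) :
    a * c / (a + b) + b * c / (a + b) = c := by
  rw [← add_div, ← add_mul, mul_div_cancel_left₀ _ h]

def elemStep : K × K × K → K × K × K
  | (e, q, q') => (e * q / (e + q'), q' * q / (e + q'), e + q')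

def elemStepInv : K × K × K → K × K × K
  | (e, q, q') => (e * q' / (e + q), e + q, q * q' / (e + q))

theorem elemStepInv_elemStep {e q q' : K} (hs : e + q' ≠ 0) (hq : q ≠ 0) :
    elemStepInv (elemStep (e, q, q')) = (e, q, q') := by
  simp only [elemStep, elemStepInv, mul_div_add_mul_div_eq q hs, div_mul_cancel₀ _ hs,
    mul_div_cancel_right₀ _ hq]

theorem elemStep_elemStepInv {e q q' : K} (hs : e + q ≠ 0) (hq' : q' ≠ 0) :
    elemStep (elemStepInv (e, q, q')) = (e, q, q') := by
  simp only [elemStep, elemStepInv, mul_div_add_mul_div_eq q' hs, div_mul_cancel₀ _ hs,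
    mul_div_cancel_right₀ _ hq']

end ElementaryStep

theorem stmt_4 (e qi qi1 : ℝ) (he : 0 < e) (hqi : 0 < qi) (hqi1 : 0 < qi1) :
    let et : ℝ := e * qi / (e + qi1)
    let qti : ℝ := qi1 * qi / (e + qi1)
    let qti1 : ℝ := e + qi1
    ((0 < et ∧ 0 < qti ∧ 0 < qti1) ∧
      e = et * qti1 / (et + qti) ∧ qi = et + qti ∧ qi1 = qti * qti1 / (et + qti)) ∧
    ∀ e' q0' q1' : ℝ, 0 < e' → 0 < q0' → 0 < q1' →
      let eb : ℝ := e' * q1' / (e' + q0')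
      let qb0 : ℝ := e' + q0'
      let qb1 : ℝ := q0' * q1' / (e' + q0')
      (0 < eb ∧ 0 < qb0 ∧ 0 < qb1) ∧
      e' = eb * qb0 / (eb + qb1) ∧ q0' = qb1 * qb0 / (eb + qb1) ∧ q1' = eb + qb1 := by
  intro et qti qti1
  have hforward := elemStepInv_elemStep (add_pos he hqi1).ne' hqi.ne'
  simp only [elemStep, elemStepInv, Prod.mk.injEq] at hforward
  obtain ⟨he_eq, hqi_eq, hqi1_eq⟩ := hforward
  refine ⟨⟨⟨by positivity, by positivity, by positivity⟩, he_eq.symm, hqi_eq.symm,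
    hqi1_eq.symm⟩, fun e' q0' q1' he' hq0' hq1' => ?_⟩
  have hbackward := elemStep_elemStepInv (add_pos he' hq0').ne' hq1'.ne'
  simp only [elemStep, elemStepInv, Prod.mk.injEq] at hbackward
  obtain ⟨he'_eq, hq0'_eq, hq1'_eq⟩ := hbackward
  exact ⟨⟨by positivity, by positivity, by positivity⟩, he'_eq.symm, hq0'_eq.symm,
    hq1'_eq.symm⟩
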